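/- arXiv:2605.04419 — 2 statements merged into one kernel-verified Lean document; each statement's English description precedes it below -/
import Mathlib

section
/- Let n ≥ 1 be an integer, let φ_0, …, φ_k ∈ ℝ^n, let y_0, …, y_k ∈ ℝ, let λ_0, …, λ_k ∈ (0,1], define ρ_i = ∏_{j=0}^{i} λ_j^{-1}, let P_0 ∈ ℝ^{n×n} be symmetric positive definite, and let θ_0 ∈ ℝ^n. Define recursively, for 0 ≤ i ≤ k, L_i = λ_i^{-1} P_i, P_{i+1} = L_i − (1/(1 + φ_iᵀ L_i φ_i)) L_i φ_i φ_iᵀ L_i, and θ_{i+1} = θ_i + P_{i+1} φ_i (y_i − θ_iᵀ φ_i). Then θ_{k+1} is the unique global minimizer of the cost J_k(θ̂) = ∑_{i=0}^{k} (ρ_i/ρ_k) (y_i − θ̂ᵀ φ_i)² + (1/ρ_k) (θ̂ − θ_0)ᵀ P_0^{-1} (θ̂ − θ_0). -/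
/-!
Unrolling the recursion, `P_N` is the inverse of the normal matrix of the weighted
least-squares cost `J_{N-1}`, and `θ_N` solves the corresponding normal equations: forgetting
multiplies the old normal matrix by `λ_N` and the new measurement adds `φ_N φ_Nᵀ`, and the
covariance update is exactly the Sherman–Morrison formula for the inverse of that rank-one
update. Since `J_k(θ + d) = J_k(θ) + 2 dᵀ(Hθ - g) + dᵀ H d` with `H` positive definite, a
solution of the normal equations `Hθ = g` is the unique minimizer.
-/

open Matrix Finset

section RankOneUpdate

variable {m : Type*} [Fintype m] [DecidableEq m]

theorem Matrix.sherman_morrison {K : Type*} [Field K] {L A : Matrix m m K} (hLA : L * A = 1)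
    (u v : m → K) (hs : 1 + v ⬝ᵥ (L *ᵥ u) ≠ 0) :
    (L - (1 / (1 + v ⬝ᵥ (L *ᵥ u))) • vecMulVec (L *ᵥ u) (v ᵥ* L)) * (A + vecMulVec u v) = 1 := by
  have hvLA : v ᵥ* L ᵥ* A = v := by rw [vecMul_vecMul, hLA, vecMul_one]
  rw [Matrix.sub_mul, Matrix.mul_add, Matrix.mul_add, hLA, mul_vecMulVec, Matrix.smul_mul,
    Matrix.smul_mul, vecMulVec_mul, hvLA, vecMulVec_mul_vecMulVec, vecMulVec_smul,
    ← dotProduct_mulVec, smul_smul, ← add_smul]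
  have hcoef : 1 / (1 + v ⬝ᵥ (L *ᵥ u)) + 1 / (1 + v ⬝ᵥ (L *ᵥ u)) * (v ⬝ᵥ (L *ᵥ u)) = 1 := by
    field_simp
  rw [hcoef, one_smul, add_sub_cancel_right]

theorem rls_estimate_step {K : Type*} [Field K] {S P' : Matrix m m K}
    {lam : K} {φ : m → K} (hSP' : (lam • S + vecMulVec φ φ) * P' = 1) (y : K) {θ b : m → K}
    (hθ : S *ᵥ θ = b) :
    (lam • S + vecMulVec φ φ) *ᵥ (θ + (y - θ ⬝ᵥ φ) • (P' *ᵥ φ)) = lam • b + y • φ := by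
  rw [mulVec_add, mulVec_smul, mulVec_mulVec, hSP', one_mulVec, add_mulVec, smul_mulVec, hθ,
    vecMulVec_mulVec, op_smul_eq_smul, dotProduct_comm, add_assoc, ← add_smul, add_sub_cancel]

theorem rls_step {S P L P' : Matrix m m ℝ} {lam : ℝ} (hlam : 0 < lam) (hS : S.PosDef)
    (hPS : P * S = 1) (hL : L = lam⁻¹ • P) {φ : m → ℝ}
    (hP' : P' = L - (1 / (1 + φ ⬝ᵥ (L *ᵥ φ))) • vecMulVec (L *ᵥ φ) (φ ᵥ* L))
    {y : ℝ} {θ θ' b : m → ℝ} (hθ : S *ᵥ θ = b) (hθ' : θ' = θ + (y - θ ⬝ᵥ φ) • (P' *ᵥ φ)) :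
    P' * (lam • S + vecMulVec φ φ) = 1 ∧ (lam • S + vecMulVec φ φ) *ᵥ θ' = lam • b + y • φ := by
  have hLS : L * (lam • S) = 1 := by
    rw [hL, Matrix.smul_mul, Matrix.mul_smul, hPS, smul_smul, inv_mul_cancel₀ hlam.ne', one_smul]
  have hL_pos : L.PosDef := by
    rw [hL, ← inv_eq_left_inv hPS]
    exact hS.inv.smul (inv_pos.mpr hlam)
  have hgain : 1 + φ ⬝ᵥ (L *ᵥ φ) ≠ 0 := by
    have := hL_pos.posSemidef.dotProduct_mulVec_nonneg φ
    rw [star_trivial] at this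
    positivity
  have hcov : P' * (lam • S + vecMulVec φ φ) = 1 := hP' ▸ sherman_morrison hLS φ φ hgain
  exact ⟨hcov, hθ' ▸ rls_estimate_step (mul_eq_one_comm.mp hcov) y hθ⟩

end RankOneUpdate

section WeightedLeastSquares

variable {m ι : Type*} (Q : Matrix m m ℝ) (θ0 : m → ℝ) (φ : ι → m → ℝ) (y : ι → ℝ)
  (c : ℝ) (w : ι → ℝ) (s : Finset ι)

def wlsMatrix : Matrix m m ℝ := c • Q + ∑ i ∈ s, w i • vecMulVec (φ i) (φ i)

theorem wlsMatrix_insert [DecidableEq ι] {a : ι} {μ c' : ℝ} {w' : ι → ℝ} (ha : a ∉ s)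
    (hc : c' = μ * c) (hw : ∀ i ∈ s, w' i = μ * w i) (hwa : w' a = 1) :
    wlsMatrix Q φ c' w' (insert a s) = μ • wlsMatrix Q φ c w s + vecMulVec (φ a) (φ a) := by
  have hsum : ∑ i ∈ s, w' i • vecMulVec (φ i) (φ i) =
      μ • ∑ i ∈ s, w i • vecMulVec (φ i) (φ i) := by
    rw [smul_sum]
    exact sum_congr rfl fun i hi => by rw [hw i hi, smul_smul]
  rw [wlsMatrix, wlsMatrix, sum_insert ha, hwa, one_smul, hsum, hc, smul_add, mul_smul]
  abel

variable [Fintype m]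

def wlsVector : m → ℝ := c • (Q *ᵥ θ0) + ∑ i ∈ s, (w i * y i) • φ i

def wlsCost (θ : m → ℝ) : ℝ :=
  ∑ i ∈ s, w i * (y i - θ ⬝ᵥ φ i) ^ 2 + c * ((θ - θ0) ⬝ᵥ (Q *ᵥ (θ - θ0)))

theorem wlsVector_insert [DecidableEq ι] {a : ι} {μ c' : ℝ} {w' : ι → ℝ} (ha : a ∉ s)
    (hc : c' = μ * c) (hw : ∀ i ∈ s, w' i = μ * w i) (hwa : w' a = 1) :
    wlsVector Q θ0 φ y c' w' (insert a s) = μ • wlsVector Q θ0 φ y c w s + y a • φ a := by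
  have hsum : ∑ i ∈ s, (w' i * y i) • φ i = μ • ∑ i ∈ s, (w i * y i) • φ i := by
    rw [smul_sum]
    exact sum_congr rfl fun i hi => by rw [hw i hi, smul_smul, mul_assoc]
  rw [wlsVector, wlsVector, sum_insert ha, hwa, one_mul, hsum, hc, smul_add, mul_smul]
  abel

theorem wlsMatrix_posDef (hQ : Q.PosDef) (hc : 0 < c) (hw : ∀ i ∈ s, 0 ≤ w i) :
    (wlsMatrix Q φ c w s).PosDef :=
  (hQ.smul hc).add_posSemidef <| posSemidef_sum s fun i hi =>
    (star_trivial (φ i) ▸ posSemidef_vecMulVec_self_star (φ i)).smul (hw i hi)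

theorem dotProduct_wlsMatrix_mulVec (d v : m → ℝ) :
    d ⬝ᵥ (wlsMatrix Q φ c w s *ᵥ v) =
      c * (d ⬝ᵥ (Q *ᵥ v)) + ∑ i ∈ s, w i * ((d ⬝ᵥ φ i) * (φ i ⬝ᵥ v)) := by
  simp only [wlsMatrix, add_mulVec, sum_mulVec, smul_mulVec, vecMulVec_mulVec, op_smul_eq_smul,
    dotProduct_add, dotProduct_sum, dotProduct_smul, smul_eq_mul]
  exact congrArg _ (sum_congr rfl fun i _ => by ring)

theorem dotProduct_wlsVector (d : m → ℝ) :
    d ⬝ᵥ wlsVector Q θ0 φ y c w s =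
      c * (d ⬝ᵥ (Q *ᵥ θ0)) + ∑ i ∈ s, w i * (y i * (d ⬝ᵥ φ i)) := by
  simp only [wlsVector, dotProduct_add, dotProduct_sum, dotProduct_smul, smul_eq_mul]
  exact congrArg _ (sum_congr rfl fun i _ => by ring)

theorem wlsCost_add (hQ : Q.IsSymm) (θ d : m → ℝ) :
    wlsCost Q θ0 φ y c w s (θ + d) = wlsCost Q θ0 φ y c w s θ +
      2 * (d ⬝ᵥ (wlsMatrix Q φ c w s *ᵥ θ - wlsVector Q θ0 φ y c w s)) +
        d ⬝ᵥ (wlsMatrix Q φ c w s *ᵥ d) := by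
  have hresidual : ∑ i ∈ s, w i * (y i - (θ + d) ⬝ᵥ φ i) ^ 2 =
      ∑ i ∈ s, w i * (y i - θ ⬝ᵥ φ i) ^ 2 +
        2 * (∑ i ∈ s, w i * ((d ⬝ᵥ φ i) * (φ i ⬝ᵥ θ)) - ∑ i ∈ s, w i * (y i * (d ⬝ᵥ φ i))) +
          ∑ i ∈ s, w i * ((d ⬝ᵥ φ i) * (φ i ⬝ᵥ d)) := by
    simp only [mul_sub, mul_sum, ← sum_sub_distrib, ← sum_add_distrib]
    refine sum_congr rfl fun i _ => ?_
    rw [add_dotProduct, dotProduct_comm (φ i) θ, dotProduct_comm (φ i) d]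
    ring
  have hprior : (θ + d - θ0) ⬝ᵥ (Q *ᵥ (θ + d - θ0)) = (θ - θ0) ⬝ᵥ (Q *ᵥ (θ - θ0)) +
      2 * (d ⬝ᵥ (Q *ᵥ θ) - d ⬝ᵥ (Q *ᵥ θ0)) + d ⬝ᵥ (Q *ᵥ d) := by
    have hsymm : (θ - θ0) ⬝ᵥ (Q *ᵥ d) = d ⬝ᵥ (Q *ᵥ (θ - θ0)) := by
      rw [dotProduct_mulVec, ← mulVec_transpose, hQ.eq, dotProduct_comm]
    rw [add_sub_right_comm, mulVec_add, dotProduct_add, add_dotProduct, add_dotProduct, hsymm]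
    simp only [mulVec_sub, dotProduct_sub]
    ring
  rw [dotProduct_sub, dotProduct_wlsMatrix_mulVec, dotProduct_wlsMatrix_mulVec,
    dotProduct_wlsVector, wlsCost, wlsCost, hresidual, hprior]
  ring

theorem wlsCost_uniqueMinimizer (hQ : Q.IsSymm) (hH : (wlsMatrix Q φ c w s).PosDef) {θ : m → ℝ}
    (hθ : wlsMatrix Q φ c w s *ᵥ θ = wlsVector Q θ0 φ y c w s) :
    (∀ θ', wlsCost Q θ0 φ y c w s θ ≤ wlsCost Q θ0 φ y c w s θ') ∧
      ∀ x, (∀ θ', wlsCost Q θ0 φ y c w s x ≤ wlsCost Q θ0 φ y c w s θ') → x = θ := by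
  have hcost : ∀ θ', wlsCost Q θ0 φ y c w s θ' =
      wlsCost Q θ0 φ y c w s θ + (θ' - θ) ⬝ᵥ (wlsMatrix Q φ c w s *ᵥ (θ' - θ)) := by
    intro θ'
    simpa [hθ] using wlsCost_add Q θ0 φ y c w s hQ θ (θ' - θ)
  refine ⟨fun θ' => ?_, fun x hx => ?_⟩
  · have := hH.posSemidef.dotProduct_mulVec_nonneg (θ' - θ)
    rw [star_trivial] at this
    linarith [hcost θ']
  · by_contra hne
    have := hH.dotProduct_mulVec_pos (sub_ne_zero.mpr hne)
    rw [star_trivial] at this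
    linarith [hcost x, hx θ]

end WeightedLeastSquares

noncomputable section RecursiveLeastSquares

variable {m : Type*} (Q : Matrix m m ℝ) (θ0 : m → ℝ) (φ : ℕ → m → ℝ) (y lam : ℕ → ℝ)

/-- The paper's `ρ_i` is `rlsNormalizer lam (i + 1)`. -/
def rlsNormalizer (N : ℕ) : ℝ := ∏ j ∈ range N, (lam j)⁻¹

/-- The normal matrix of the cost `J_{N-1}`. -/
def rlsMatrix (N : ℕ) : Matrix m m ℝ :=
  wlsMatrix Q φ (1 / rlsNormalizer lam N)
    (fun j => rlsNormalizer lam (j + 1) / rlsNormalizer lam N) (range N)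

def rlsVector [Fintype m] (N : ℕ) : m → ℝ :=
  wlsVector Q θ0 φ y (1 / rlsNormalizer lam N)
    (fun j => rlsNormalizer lam (j + 1) / rlsNormalizer lam N) (range N)

variable {lam}

theorem rlsNormalizer_pos {N : ℕ} (h : ∀ j < N, 0 < lam j) : 0 < rlsNormalizer lam N :=
  prod_pos fun j hj => inv_pos.mpr (h j (mem_range.mp hj))

theorem div_rlsNormalizer_succ (a : ℝ) (N : ℕ) :
    a / rlsNormalizer lam (N + 1) = lam N * (a / rlsNormalizer lam N) := by
  simp only [rlsNormalizer, prod_range_succ, div_eq_mul_inv, mul_inv, inv_inv]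
  ring

theorem rlsNormalizer_succ_ne_zero {N : ℕ} (h : ∀ j ≤ N, lam j ≠ 0) :
    rlsNormalizer lam (N + 1) ≠ 0 :=
  prod_ne_zero_iff.mpr fun j hj => inv_ne_zero (h j (Nat.lt_succ_iff.mp (mem_range.mp hj)))

theorem rlsMatrix_succ {N : ℕ} (h : ∀ j ≤ N, lam j ≠ 0) :
    rlsMatrix Q φ lam (N + 1) = lam N • rlsMatrix Q φ lam N + vecMulVec (φ N) (φ N) := by
  rw [rlsMatrix, rlsMatrix, range_add_one]
  exact wlsMatrix_insert _ _ _ _ _ notMem_range_self (div_rlsNormalizer_succ 1 N)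
    (fun j _ => div_rlsNormalizer_succ _ N) (div_self (rlsNormalizer_succ_ne_zero h))

variable [Fintype m]

theorem rlsVector_succ {N : ℕ} (h : ∀ j ≤ N, lam j ≠ 0) :
    rlsVector Q θ0 φ y lam (N + 1) = lam N • rlsVector Q θ0 φ y lam N + y N • φ N := by
  rw [rlsVector, rlsVector, range_add_one]
  exact wlsVector_insert _ _ _ _ _ _ _ notMem_range_self (div_rlsNormalizer_succ 1 N)
    (fun j _ => div_rlsNormalizer_succ _ N) (div_self (rlsNormalizer_succ_ne_zero h))

theorem rlsMatrix_posDef (hQ : Q.PosDef) {N : ℕ} (h : ∀ j < N, 0 < lam j) :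
    (rlsMatrix Q φ lam N).PosDef := by
  have hN := rlsNormalizer_pos h
  refine wlsMatrix_posDef _ _ _ _ _ hQ (by positivity) fun j hj => ?_
  have hj : 0 < rlsNormalizer lam (j + 1) :=
    rlsNormalizer_pos fun i hi => h i (by rw [mem_range] at hj; omega)
  positivity

end RecursiveLeastSquares

theorem rls_recursion_minimizes_cost_general
    (n : ℕ) (k : ℕ)
    (φ : ℕ → Fin n → ℝ) (y : ℕ → ℝ) (lam : ℕ → ℝ)
    (hlam : ∀ i, i ≤ k → lam i ∈ Set.Ioc (0 : ℝ) 1)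
    (ρ : ℕ → ℝ) (hρ : ∀ i, ρ i = ∏ j ∈ Finset.range (i + 1), (lam j)⁻¹)
    (P0 : Matrix (Fin n) (Fin n) ℝ) (hP0 : P0.PosDef)
    (θ0 : Fin n → ℝ)
    (P : ℕ → Matrix (Fin n) (Fin n) ℝ)
    (L : ℕ → Matrix (Fin n) (Fin n) ℝ)
    (θ : ℕ → Fin n → ℝ)
    (hPinit : P 0 = P0) (hθinit : θ 0 = θ0)
    (hL : ∀ i, i ≤ k → L i = (lam i)⁻¹ • P i)
    (hPrec : ∀ i, i ≤ k →
      P (i + 1) = L i - (1 / (1 + φ i ⬝ᵥ (L i *ᵥ φ i))) •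
        Matrix.vecMulVec (L i *ᵥ φ i) (Matrix.vecMul (φ i) (L i)))
    (hθrec : ∀ i, i ≤ k →
      θ (i + 1) = θ i + (y i - θ i ⬝ᵥ φ i) • (P (i + 1) *ᵥ φ i))
    (J : (Fin n → ℝ) → ℝ)
    (hJ : ∀ th : Fin n → ℝ,
      J th = (∑ i ∈ Finset.range (k + 1), (ρ i / ρ k) * (y i - th ⬝ᵥ φ i) ^ 2)
        + (1 / ρ k) * ((th - θ0) ⬝ᵥ (P0⁻¹ *ᵥ (th - θ0)))) :
    (∀ th : Fin n → ℝ, J (θ (k + 1)) ≤ J th) ∧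
      (∀ x : Fin n → ℝ, (∀ th, J x ≤ J th) → x = θ (k + 1)) := by
  obtain rfl : ρ = fun i => rlsNormalizer lam (i + 1) := funext hρ
  obtain rfl : J = wlsCost P0⁻¹ θ0 φ y (1 / rlsNormalizer lam (k + 1))
      (fun i => rlsNormalizer lam (i + 1) / rlsNormalizer lam (k + 1)) (range (k + 1)) :=
    funext hJ
  have hlam_pos : ∀ i, i < k + 1 → 0 < lam i := fun i hi => (hlam i (by omega)).1
  have hS_pos : ∀ N ≤ k + 1, (rlsMatrix P0⁻¹ φ lam N).PosDef := fun N hN =>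
    rlsMatrix_posDef _ _ hP0.inv fun j hj => hlam_pos j (by omega)
  have hinvariant : ∀ N ≤ k + 1, P N * rlsMatrix P0⁻¹ φ lam N = 1 ∧
      rlsMatrix P0⁻¹ φ lam N *ᵥ θ N = rlsVector P0⁻¹ θ0 φ y lam N := by
    intro N hN
    induction N with
    | zero =>
      simpa [rlsMatrix, rlsVector, rlsNormalizer, wlsMatrix, wlsVector, hPinit, hθinit] using
        mul_nonsing_inv P0 hP0.det_pos.ne'.isUnit
    | succ N ih =>
      obtain ⟨hPS, hθS⟩ := ih (by omega)
      have hlam_ne : ∀ j ≤ N, lam j ≠ 0 := fun j hj => (hlam_pos j (by omega)).ne'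
      rw [rlsMatrix_succ _ _ hlam_ne, rlsVector_succ _ _ _ _ hlam_ne]
      exact rls_step (hlam_pos N (by omega)) (hS_pos N (by omega)) hPS (hL N (by omega))
        (hPrec N (by omega)) hθS (hθrec N (by omega))
  exact wlsCost_uniqueMinimizer _ _ _ _ _ _ _ hP0.inv.isHermitian (hS_pos _ le_rfl)
    (hinvariant _ le_rfl).2

/-- The RLS recursion (with variable-rate forgetting) produces the unique
global minimizer of the RLS cumulative cost. -/
theorem rls_recursion_minimizes_cost
    (n : ℕ) (hn : 1 ≤ n) (k : ℕ)
    (φ : ℕ → Fin n → ℝ) (y : ℕ → ℝ) (lam : ℕ → ℝ)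
    (hlam : ∀ i, i ≤ k → lam i ∈ Set.Ioc (0 : ℝ) 1)
    (ρ : ℕ → ℝ) (hρ : ∀ i, ρ i = ∏ j ∈ Finset.range (i + 1), (lam j)⁻¹)
    (P0 : Matrix (Fin n) (Fin n) ℝ) (hP0 : P0.PosDef)
    (θ0 : Fin n → ℝ)
    (P : ℕ → Matrix (Fin n) (Fin n) ℝ)
    (L : ℕ → Matrix (Fin n) (Fin n) ℝ)
    (θ : ℕ → Fin n → ℝ)
    (hPinit : P 0 = P0) (hθinit : θ 0 = θ0)
    (hL : ∀ i, i ≤ k → L i = (lam i)⁻¹ • P i)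
    (hPrec : ∀ i, i ≤ k →
      P (i + 1) = L i - (1 / (1 + φ i ⬝ᵥ (L i *ᵥ φ i))) •
        Matrix.vecMulVec (L i *ᵥ φ i) (Matrix.vecMul (φ i) (L i)))
    (hθrec : ∀ i, i ≤ k →
      θ (i + 1) = θ i + (y i - θ i ⬝ᵥ φ i) • (P (i + 1) *ᵥ φ i))
    (J : (Fin n → ℝ) → ℝ)
    (hJ : ∀ th : Fin n → ℝ,
      J th = (∑ i ∈ Finset.range (k + 1), (ρ i / ρ k) * (y i - th ⬝ᵥ φ i) ^ 2)
        + (1 / ρ k) * ((th - θ0) ⬝ᵥ (P0⁻¹ *ᵥ (th - θ0)))) :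
    (∀ th : Fin n → ℝ, J (θ (k + 1)) ≤ J th) ∧
      (∀ x : Fin n → ℝ, (∀ th, J x ≤ J th) → x = θ (k + 1)) :=
  rls_recursion_minimizes_cost_general n k φ y lam hlam ρ hρ P0 hP0 θ0 P L θ hPinit hθinit hL hPrec
    hθrec J hJ
end

section
/- Let n ≥ 1, let R_0, R_∞ ∈ ℝ^{n×n} be symmetric positive definite, let (λ_k)_{k≥0} be a sequence in (0,1], let (φ_k)_{k≥0} be a sequence in ℝ^n, and define recursively R_{k+1} = λ_k R_k + (1 − λ_k) R_∞ + φ_k φ_kᵀ. Then for every k ≥ 0, R_k ⪰ α_k R_0 + (1 − α_k) R_∞ in the Loewner (positive-semidefinite) order, where α_k = ∏_{j=0}^{k−1} λ_j (with α_0 = 1). -/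
/-!
Write `E k = R k - (α k • R 0 + (1 - α k) • Rinf)`. Since `α (k + 1) = λ k * α k`, the resetting
term `(1 - λ k) • Rinf` is absorbed exactly and `E (k + 1) = λ k • E k + φ k φ kᵀ`. Starting from
`E 0 = 0`, every `E k` is then positive semidefinite because `λ k ≥ 0` and `φ k φ kᵀ ⪰ 0`.
-/

open Matrix

theorem interpolation_gap_recurrence {K M : Type*} [CommRing K] [AddCommGroup M]
    [Module K M] (l a : K) (x y z v : M) :
    l • x + (1 - l) • z + v - ((l * a) • y + (1 - l * a) • z) =
      l • (x - (a • y + (1 - a) • z)) + v := by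
  module

theorem Matrix.posSemidef_of_smul_add_recurrence {m R : Type*} [Fintype m] [CommRing R]
    [PartialOrder R] [IsOrderedRing R] [StarRing R] [StarOrderedRing R]
    {E P : ℕ → Matrix m m R} {c : ℕ → R} (h₀ : (E 0).PosSemidef) (hc : ∀ k, 0 ≤ c k)
    (hP : ∀ k, (P k).PosSemidef) (hE : ∀ k, E (k + 1) = c k • E k + P k) :
    ∀ k, (E k).PosSemidef
  | 0 => h₀
  | k + 1 => hE k ▸ ((posSemidef_of_smul_add_recurrence h₀ hc hP hE k).smul (hc k)).add (hP k)

theorem er_rls_information_matrix_lower_bound_general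
    (n : ℕ)
    (Rinf : Matrix (Fin n) (Fin n) ℝ)
    (lam : ℕ → ℝ) (hlam : ∀ k, lam k ∈ Set.Ioc (0 : ℝ) 1)
    (φ : ℕ → Fin n → ℝ)
    (R : ℕ → Matrix (Fin n) (Fin n) ℝ)
    (hrec : ∀ k, R (k + 1) = lam k • R k + (1 - lam k) • Rinf +
      Matrix.vecMulVec (φ k) (φ k))
    (α : ℕ → ℝ) (hα : ∀ k, α k = ∏ j ∈ Finset.range k, lam j) :
    ∀ k, (R k - (α k • R 0 + (1 - α k) • Rinf)).PosSemidef := by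
  have hα_succ (k : ℕ) : α (k + 1) = lam k * α k := by
    rw [hα, hα, Finset.prod_range_succ, mul_comm]
  refine posSemidef_of_smul_add_recurrence (c := lam) (P := fun k ↦ vecMulVec (φ k) (φ k))
    (by simpa [hα] using PosSemidef.zero) (fun k ↦ (hlam k).1.le) (fun k ↦ ?_) (fun k ↦ ?_)
  · simpa using posSemidef_vecMulVec_self_star (φ k)
  · rw [hrec, hα_succ, interpolation_gap_recurrence]

/-- Step-dependent Loewner lower bound for the exponential-resetting RLS
information matrix: `R_k ⪰ α_k R_0 + (1 − α_k) R_∞` with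
`α_k = ∏_{j<k} λ_j`. -/
theorem er_rls_information_matrix_lower_bound
    (n : ℕ) (hn : 1 ≤ n)
    (Rinf : Matrix (Fin n) (Fin n) ℝ) (hRinf : Rinf.PosDef)
    (lam : ℕ → ℝ) (hlam : ∀ k, lam k ∈ Set.Ioc (0 : ℝ) 1)
    (φ : ℕ → Fin n → ℝ)
    (R : ℕ → Matrix (Fin n) (Fin n) ℝ)
    (hR0 : (R 0).PosDef)
    (hrec : ∀ k, R (k + 1) = lam k • R k + (1 - lam k) • Rinf +
      Matrix.vecMulVec (φ k) (φ k))
    (α : ℕ → ℝ) (hα : ∀ k, α k = ∏ j ∈ Finset.range k, lam j) :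
    ∀ k, (R k - (α k • R 0 + (1 - α k) • Rinf)).PosSemidef :=
  er_rls_information_matrix_lower_bound_general n Rinf lam hlam φ R hrec α hα
end
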